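/- arXiv:1408.2237 — 4 statements merged into one kernel-verified Lean document; each statement's English description precedes it below -/
import Mathlib

section
/- Average-radius Johnson bound for binary codes: Let C ⊆ F₂^n be a binary code. Then for every subset Λ ⊆ C of size L and every z ∈ F₂^n, ∑_{x∈Λ} agr(x,z) ≤ (n/2)·(L + √(L² − (2/n)·∑_{x≠y∈Λ} d(x,y))), where d denotes Hamming distance and the inner sum is over ordered pairs of distinct codewords in Λ. -/
/-- Average-radius Johnson bound for binary codes. -/
theorem avg_radius_johnson_binary
    {n L : ℕ} (C : Finset (Fin n → ZMod 2))
    (Λ : Finset (Fin n → ZMod 2)) (hΛ : Λ ⊆ C) (hcard : Λ.card = L)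
    (z : Fin n → ZMod 2) :
    ∑ x ∈ Λ, ((n : ℝ) - hammingDist x z)
      ≤ ((n : ℝ) / 2) *
        (L + Real.sqrt ((L : ℝ)^2 -
          (2 / n) * ∑ x ∈ Λ, ∑ y ∈ Λ.erase x, (hammingDist x y : ℝ))) := by
  classical
  rcases Nat.eq_zero_or_pos n with hn | hn
  · subst hn
    have : ∀ x : Fin 0 → ZMod 2, hammingDist x z = 0 := fun x => by
      simp [hammingDist]
    simp [this]
  set f : (Fin n → ZMod 2) → Fin n → ℝ := fun x j => if x j = z j then 1 else -1 with hf
  have hgen : ∀ a b c : ZMod 2, a ≠ b → ((a = c ∧ ¬ b = c) ∨ (¬ a = c ∧ b = c)) := by decide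
  have key : ∀ x y : Fin n → ZMod 2,
      ∑ j, f x j * f y j = (n : ℝ) - 2 * hammingDist x y := by
    intro x y
    have hpt : ∀ j, f x j * f y j = 1 - 2 * (if x j = y j then (0:ℝ) else 1) := by
      intro j
      simp only [hf]
      by_cases hxy : x j = y j
      · rw [hxy]
        by_cases h : y j = z j <;> simp [h, hxy]
      · rcases hgen _ _ (z j) hxy with ⟨h1, h2⟩ | ⟨h1, h2⟩
        · rw [if_pos h1, if_neg h2, if_neg hxy]; ring
        · rw [if_neg h1, if_pos h2, if_neg hxy]; ring
    have hd : ((hammingDist x y : ℕ) : ℝ) = ∑ j, if x j = y j then (0:ℝ) else 1 := by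
      rw [hammingDist, ← Finset.sum_boole]
      push_cast
      exact Finset.sum_congr rfl fun j _ => by by_cases h : x j = y j <;> simp [h]
    rw [Finset.sum_congr rfl fun j _ => hpt j, Finset.sum_sub_distrib, Finset.sum_const,
      ← Finset.mul_sum, ← hd]
    push_cast [Finset.card_univ, nsmul_eq_mul, Fintype.card_fin]
    ring
  set S : Fin n → ℝ := fun j => ∑ x ∈ Λ, f x j with hS
  set D : ℝ := ∑ x ∈ Λ, ∑ y ∈ Λ, (hammingDist x y : ℝ) with hD
  set A : ℝ := ∑ x ∈ Λ, ((n : ℝ) - hammingDist x z) with hA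
  have h1 : ∑ j, S j = 2 * A - n * L := by
    rw [hS]
    rw [Finset.sum_comm]
    have : ∀ x ∈ Λ, ∑ j, f x j = (n : ℝ) - 2 * hammingDist x z := by
      intro x _
      have := key x z
      simpa [hf] using this
    rw [Finset.sum_congr rfl this, hA, ← hcard]
    simp only [Finset.sum_sub_distrib, Finset.sum_const, nsmul_eq_mul, ← Finset.mul_sum]
    ring
  have h2 : ∑ j, (S j)^2 = n * L^2 - 2 * D := by
    have expand : ∀ j, (S j)^2 = ∑ x ∈ Λ, ∑ y ∈ Λ, f x j * f y j := by
      intro j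
      rw [sq, hS, Finset.sum_mul_sum]
    rw [Finset.sum_congr rfl fun j _ => expand j]
    rw [Finset.sum_comm]
    have : ∀ x ∈ Λ, ∑ j, ∑ y ∈ Λ, f x j * f y j
        = ∑ y ∈ Λ, ((n:ℝ) - 2 * hammingDist x y) := by
      intro x _
      rw [Finset.sum_comm]
      exact Finset.sum_congr rfl fun y _ => key x y
    rw [Finset.sum_congr rfl this, ← hcard]
    simp only [Finset.sum_sub_distrib, Finset.sum_const, nsmul_eq_mul, ← Finset.mul_sum, ← hD]
    ring
  have hDe : (∑ x ∈ Λ, ∑ y ∈ Λ.erase x, (hammingDist x y : ℝ)) = D := by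
    rw [hD]
    exact Finset.sum_congr rfl fun x _ => Finset.sum_erase _ (by simp)
  have hcs := sq_sum_le_card_mul_sum_sq (s := (Finset.univ : Finset (Fin n))) (f := S)
  rw [h1, h2, Finset.card_univ, Fintype.card_fin] at hcs
  have hnn : (0:ℝ) ≤ (n:ℝ) * L^2 - 2 * D := by
    rw [← h2]
    positivity
  have hnR : (0:ℝ) < n := by exact_mod_cast hn
  set B : ℝ := (L:ℝ)^2 - (2/n) * D with hB
  have hBeq : B = ((n:ℝ) * L^2 - 2 * D) / n := by
    rw [hB]; field_simp
  have hBnn : 0 ≤ B := by rw [hBeq]; positivity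
  have hsq : ((n:ℝ) * Real.sqrt B)^2 = (n:ℝ) * ((n:ℝ) * L^2 - 2 * D) := by
    rw [mul_pow, Real.sq_sqrt hBnn, hBeq]
    field_simp
  have h3 : (2*A - (n:ℝ)*L)^2 ≤ ((n:ℝ) * Real.sqrt B)^2 := by
    rw [hsq]; exact hcs
  have hkey : 2*A - (n:ℝ)*L ≤ (n:ℝ) * Real.sqrt B :=
    calc 2*A - (n:ℝ)*L ≤ |2*A - (n:ℝ)*L| := le_abs_self _
    _ = Real.sqrt ((2*A - (n:ℝ)*L)^2) := (Real.sqrt_sq_eq_abs _).symm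
    _ ≤ Real.sqrt (((n:ℝ) * Real.sqrt B)^2) := Real.sqrt_le_sqrt h3
    _ = (n:ℝ) * Real.sqrt B := Real.sqrt_sq (by positivity)
  rw [hDe]
  have : (n:ℝ)/2 * ((L:ℝ) + Real.sqrt B) = ((n:ℝ)*L + (n:ℝ)*Real.sqrt B)/2 := by ring
  rw [this]
  linarith
end

section
/- List-size transfer lemma: Let C be a (ρ, L)-list-decodable q-ary code of block length n, and let ρ ≤ ρ' < 1 − 1/q. Then C is (ρ', L')-list-decodable with L' ≤ L · |B_q(y, ρ'n)| / (q−1)^{ρn} for every center y; in particular L' ≤ L · q^{H_q(ρ')n} / (q−1)^{ρn}. -/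
noncomputable def qaryEntropy (q : ℕ) (x : ℝ) : ℝ :=
  x * Real.logb q ((q : ℝ) - 1) - x * Real.logb q x - (1 - x) * Real.logb q (1 - x)

/-!
A codeword `c` within distance `ρ'n` of `y` is within distance `r = ρn` of at least `(q-1)^r`
words `z` of the ball `B(y, ρ'n)`: pick a set `T` of `r` coordinates such that `T` together with
the disagreement set of `c` and `y` has at most `max r (d(c,y)) ≤ ρ'n` elements, and let `z` agree
with `c` off `T` and differ from `y` on `T`. Each `z` has at most `L` codewords within distance `r`,
so double counting the pairs `(c, z)` gives `|C ∩ B(y, ρ'n)| (q-1)^r ≤ L |B(y, ρ'n)|`.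

For the volume bound `|B(y, pn)| ≤ q^(H_q(p) n)`, weight each word `z` by `x^d(y,z)` with
`x = p / ((q-1)(1-p)) ≤ 1`: the weights of all words sum to `(1-p)^(-n)`, each word of the ball
weighs at least `x^(pn)`, and `x^(pn) (1-p)^n = q^(-H_q(p) n)`.
-/

open Finset

section

variable {ι α : Type*} [Fintype ι] [DecidableEq ι] [Fintype α] [DecidableEq α]

noncomputable def hammingBall (y : ι → α) (R : ℝ) : Finset (ι → α) :=
  {z | (hammingDist y z : ℝ) ≤ R}

@[simp]
lemma mem_hammingBall {y z : ι → α} {R : ℝ} :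
    z ∈ hammingBall y R ↔ (hammingDist y z : ℝ) ≤ R := by
  simp [hammingBall]

lemma sum_pow_hammingDist {R : Type*} [CommRing R] (y : ι → α) (x : R) :
    ∑ z : ι → α, x ^ hammingDist y z = (1 + (Fintype.card α - 1) * x) ^ Fintype.card ι := by
  have coord (i : ι) : ∑ v : α, (if y i ≠ v then x else 1) = 1 + (Fintype.card α - 1) * x := by
    have (v : α) : (if y i ≠ v then x else 1) = x + if y i = v then 1 - x else 0 := by
      split_ifs <;> simp_all
    simp only [this, sum_add_distrib, sum_const, card_univ, sum_ite_eq, mem_univ, if_true,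
      nsmul_eq_mul]
    ring
  have term (z : ι → α) : x ^ hammingDist y z = ∏ i, if y i ≠ z i then x else 1 := by
    rw [hammingDist, ← prod_const, prod_filter]
  calc ∑ z : ι → α, x ^ hammingDist y z = ∑ z : ι → α, ∏ i, if y i ≠ z i then x else 1 :=
        sum_congr rfl fun z _ => term z
    _ = ∏ i, ∑ v : α, if y i ≠ v then x else 1 := by
        rw [← Fintype.piFinset_univ, sum_prod_piFinset univ fun i v => if y i ≠ v then x else 1]
    _ = _ := by rw [prod_congr rfl fun i _ => coord i, prod_const, card_univ]

lemma rpow_mul_pow_mul_rpow_qaryEntropy {q : ℕ} (hq : 1 < q) {p : ℝ} (hp0 : 0 ≤ p) (hp1 : p < 1)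
    (n : ℕ) :
    (p / ((q - 1) * (1 - p))) ^ (p * n) * (1 - p) ^ n * (q : ℝ) ^ (qaryEntropy q p * n) = 1 := by
  obtain rfl | hp0 := hp0.eq_or_lt
  · simp [qaryEntropy]
  have hq1 : (1 : ℝ) < q := by exact_mod_cast hq
  have hq0 : (0 : ℝ) < q - 1 := by linarith
  have hp1' : 0 < 1 - p := by linarith
  have hlogq : Real.log q ≠ 0 := (Real.log_pos hq1).ne'
  rw [← Real.exp_log (x := _ * _) (by positivity), Real.exp_eq_one_iff,
    Real.log_mul (by positivity) (by positivity), Real.log_mul (by positivity) (by positivity),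
    Real.log_rpow (by positivity), Real.log_pow, Real.log_rpow (by positivity),
    Real.log_div hp0.ne' (by positivity), Real.log_mul hq0.ne' hp1'.ne']
  simp only [qaryEntropy, Real.logb]
  field_simp
  ring

lemma card_hammingBall_le (hq : 1 < Fintype.card α) (y : ι → α) {p : ℝ} (hp0 : 0 ≤ p)
    (hp : p ≤ 1 - 1 / Fintype.card α) :
    (#(hammingBall y (p * Fintype.card ι)) : ℝ)
      ≤ (Fintype.card α : ℝ) ^ (qaryEntropy (Fintype.card α) p * Fintype.card ι) := by
  set q := Fintype.card α
  set n := Fintype.card ι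
  set B := hammingBall y (p * n)
  have hq1 : (1 : ℝ) < q := by exact_mod_cast hq
  have hp1 : p < 1 := hp.trans_lt (sub_lt_self 1 (by positivity))
  have hpq : p * q ≤ q - 1 := by
    have := mul_le_mul_of_nonneg_right hp (by positivity : (0 : ℝ) ≤ q)
    rwa [sub_mul, one_div_mul_cancel (by positivity), one_mul] at this
  set x := p / ((q - 1) * (1 - p))
  have hx0 : 0 ≤ x := div_nonneg hp0 (mul_nonneg (by linarith) (by linarith))
  have hx1 : x ≤ 1 := by
    rw [div_le_one (mul_pos (by linarith) (by linarith))]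
    nlinarith
  have hsum : (1 + (q - 1) * x) * (1 - p) = 1 := by
    have : (q : ℝ) - 1 ≠ 0 := by linarith
    have : 1 - p ≠ 0 := by linarith
    simp only [x]
    field_simp
    ring
  have hweight : ∀ z ∈ B, x ^ (p * n) ≤ x ^ hammingDist y z := fun z hz => by
    rw [← Real.rpow_natCast]
    exact Real.rpow_le_rpow_of_exponent_ge' hx0 hx1 (Nat.cast_nonneg _) (mem_hammingBall.mp hz)
  have hmass : #B * (x ^ (p * n) * (1 - p) ^ n) ≤ 1 :=
    calc #B * (x ^ (p * n) * (1 - p) ^ n) = (∑ _z ∈ B, x ^ (p * n)) * (1 - p) ^ n := by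
          rw [sum_const, nsmul_eq_mul, mul_assoc]
      _ ≤ (∑ z : ι → α, x ^ hammingDist y z) * (1 - p) ^ n := by
          gcongr
          exact (sum_le_sum hweight).trans
            (sum_le_sum_of_subset_of_nonneg (subset_univ B) fun _ _ _ => by positivity)
      _ = 1 := by rw [sum_pow_hammingDist, ← mul_pow, hsum, one_pow]
  calc (#B : ℝ) ≤ #B * (x ^ (p * n) * (1 - p) ^ n * (q : ℝ) ^ (qaryEntropy q p * n)) := by
        rw [rpow_mul_pow_mul_rpow_qaryEntropy hq hp0 hp1, mul_one]
    _ ≤ (q : ℝ) ^ (qaryEntropy q p * n) := by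
        rw [← mul_assoc]
        exact mul_le_of_le_one_left (by positivity) hmass

omit [DecidableEq ι] [Fintype α] in
lemma hammingDist_le_card_of_eq_of_notMem {x y : ι → α} {s : Finset ι}
    (h : ∀ i ∉ s, x i = y i) : hammingDist x y ≤ #s :=
  card_le_card fun i hi => by_contra fun his => (mem_filter.mp hi).2 (h i his)

omit [Fintype α] [DecidableEq α] in
lemma exists_card_eq_and_card_union_eq_max (D : Finset ι) {r : ℕ} (hr : r ≤ Fintype.card ι) :
    ∃ T : Finset ι, #T = r ∧ #(T ∪ D) = max r #D := by
  rcases le_total r #D with hrD | hDr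
  · obtain ⟨T, hTD, hT⟩ := exists_subset_card_eq hrD
    exact ⟨T, hT, by rw [union_eq_right.mpr hTD, max_eq_right hrD]⟩
  · obtain ⟨T, hDT, -, hT⟩ := exists_subsuperset_card_eq (subset_univ D) hDr (by simpa using hr)
    exact ⟨T, hT, by rw [union_eq_left.mpr hDT, hT, max_eq_left hDr]⟩

lemma card_sub_one_pow_le_card_hammingBall_inter {c y : ι → α} {R : ℝ}
    (hcy : c ∈ hammingBall y R) {r : ℕ} (hrR : (r : ℝ) ≤ R) (hr : r ≤ Fintype.card ι) :
    (Fintype.card α - 1) ^ r ≤ #(hammingBall y R ∩ hammingBall c r) := by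
  obtain ⟨T, hT, hTD⟩ := exists_card_eq_and_card_union_eq_max {i | c i ≠ y i} hr
  let W := Fintype.piFinset fun i => if i ∈ T then ({y i}ᶜ : Finset α) else {c i}
  have hW : #W = (Fintype.card α - 1) ^ r := by
    simp [W, apply_ite Finset.card, card_compl, hT]
  refine hW.ge.trans (card_le_card fun z hz => ?_)
  have hzc (i) (hi : i ∉ T) : c i = z i := by
    simpa [hi, eq_comm] using Fintype.mem_piFinset.mp hz i
  have hcz : hammingDist c z ≤ r := hT ▸ hammingDist_le_card_of_eq_of_notMem hzc
  have hyz : hammingDist y z ≤ max r (hammingDist c y) := by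
    refine hTD ▸ hammingDist_le_card_of_eq_of_notMem fun i hi => ?_
    simp only [mem_union, mem_filter, mem_univ, true_and, not_or, not_not] at hi
    rw [← hi.2, hzc i hi.1]
  rw [mem_hammingBall, hammingDist_comm] at hcy
  simp only [mem_inter, mem_hammingBall]
  refine ⟨(Nat.cast_le.mpr hyz).trans ?_, by exact_mod_cast hcz⟩
  push_cast
  exact max_le hrR hcy

def IsListDecodable (C : Finset (ι → α)) (R : ℝ) (L : ℕ) : Prop :=
  ∀ y, #(C ∩ hammingBall y R) ≤ L

lemma IsListDecodable.card_inter_hammingBall_mul_le {C : Finset (ι → α)} {r L : ℕ}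
    (hC : IsListDecodable C r L) {R : ℝ} (hrR : (r : ℝ) ≤ R) (hr : r ≤ Fintype.card ι)
    (y : ι → α) :
    #(C ∩ hammingBall y R) * (Fintype.card α - 1) ^ r ≤ L * #(hammingBall y R) := by
  rw [mul_comm L]
  refine card_mul_le_card_mul (fun c z => z ∈ hammingBall c r) (fun c hc => ?_) fun z _ => ?_
  · rw [bipartiteAbove, filter_mem_eq_inter]
    exact card_sub_one_pow_le_card_hammingBall_inter (mem_inter.mp hc).2 hrR hr
  · refine le_trans (card_le_card fun c hc => ?_) (hC z)
    simp only [bipartiteBelow, mem_filter, mem_inter, mem_hammingBall] at hc ⊢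
    exact ⟨hc.1.1, hammingDist_comm c z ▸ hc.2⟩

end

/-- List-size transfer lemma. -/
theorem list_size_transfer
    (q n r L : ℕ) (hq : 2 ≤ q) (ρ ρ' : ℝ)
    (C : Finset (Fin n → Fin q))
    (hr : (r : ℝ) = ρ * n) (hρ : 0 ≤ ρ) (hρρ' : ρ ≤ ρ') (hρ'q : ρ' < 1 - 1 / q)
    (hLD : ∀ y : Fin n → Fin q,
      (C.filter (fun c => (hammingDist c y : ℝ) ≤ ρ * n)).card ≤ L) :
    ∀ y : Fin n → Fin q,
      ((C.filter (fun c => (hammingDist c y : ℝ) ≤ ρ' * n)).card : ℝ)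
          ≤ (L : ℝ) * ((Finset.univ.filter (fun z : Fin n → Fin q =>
              (hammingDist y z : ℝ) ≤ ρ' * n)).card : ℝ) / ((q : ℝ) - 1) ^ r
      ∧ ((C.filter (fun c => (hammingDist c y : ℝ) ≤ ρ' * n)).card : ℝ)
          ≤ (L : ℝ) * (q : ℝ) ^ (qaryEntropy q ρ' * n) / ((q : ℝ) - 1) ^ r := by
  intro y
  have hq1 : (1 : ℝ) < q := by exact_mod_cast hq
  have hρ'1 : ρ' < 1 := hρ'q.trans_le (sub_le_self 1 (by positivity))
  have hrρ' : (r : ℝ) ≤ ρ' * n := hr ▸ by gcongr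
  have hrn : r ≤ n := by
    have : (r : ℝ) ≤ n := hrρ'.trans (mul_le_of_le_one_left (by positivity) hρ'1.le)
    exact_mod_cast this
  have hC : IsListDecodable C r L := fun z => by
    rw [hr, ← filter_mem_eq_inter]
    simpa only [mem_hammingBall, hammingDist_comm z] using hLD z
  have hS : C.filter (fun c => (hammingDist c y : ℝ) ≤ ρ' * n) = C ∩ hammingBall y (ρ' * n) := by
    rw [← filter_mem_eq_inter]
    simp only [mem_hammingBall, hammingDist_comm y]
  have hcount := hC.card_inter_hammingBall_mul_le hrρ' (by simpa using hrn) y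
  have hvol := card_hammingBall_le (by rw [Fintype.card_fin]; omega) y (hρ.trans hρρ')
    (by simpa using hρ'q.le)
  simp only [Fintype.card_fin] at hcount hvol
  suffices hlist : (#(C ∩ hammingBall y (ρ' * n)) : ℝ)
      ≤ L * #(hammingBall y (ρ' * n)) / ((q : ℝ) - 1) ^ r by
    rw [hS]
    exact ⟨hlist, hlist.trans (by gcongr)⟩
  rw [le_div_iff₀ (by positivity)]
  have := (Nat.cast_le (α := ℝ)).mpr hcount
  push_cast [Nat.cast_sub (by omega : 1 ≤ q)] at this
  exact this
end

section
/- Without-replacement vs with-replacement domination: Let S ⊆ ℝ^d be a finite set of size M ≥ n. Let X₁,…,X_n be drawn uniformly at random from S without replacement, and let Y₁,…,Y_n be drawn i.i.d. uniformly from S. Then E[‖∑_{i=1}^n X_i‖_∞] ≤ E[‖∑_{i=1}^n Y_i‖_∞]. -/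
open Finset

namespace WRDom

variable {M n : ℕ}

def Inj (M n : ℕ) : Finset (Fin n → Fin M) :=
  Finset.univ.filter (fun g : Fin n → Fin M => Function.Injective g)
def W (f : Fin n → Fin M) : ℕ :=
  ((Inj M n).filter (fun g => ∀ i, ∃ j, g j = f i)).card

lemma W_pos (hnM : n ≤ M) (f : Fin n → Fin M) : 0 < W f := by
  rw [W, Finset.card_pos]
  have hsn : (Finset.image f Finset.univ).card ≤ n := by
    simpa using (Finset.card_image_le (s := (Finset.univ : Finset (Fin n))) (f := f))
  obtain ⟨u, hsu, -, hu⟩ := Finset.exists_subsuperset_card_eq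
    (Finset.image f Finset.univ).subset_univ hsn (by simpa using hnM)
  refine ⟨fun j => (u.orderIsoOfFin hu j : Fin M), ?_⟩
  simp only [Inj, Finset.mem_filter, Finset.mem_univ, true_and]
  constructor
  · intro a b hab
    exact (u.orderIsoOfFin hu).injective (Subtype.ext hab)
  · intro i
    have hfi : f i ∈ u := hsu (Finset.mem_image_of_mem f (Finset.mem_univ i))
    obtain ⟨j, hj⟩ := (u.orderIsoOfFin hu).surjective ⟨f i, hfi⟩
    exact ⟨j, by rw [hj]⟩

lemma W_comp_perm (π : Equiv.Perm (Fin M)) (f : Fin n → Fin M) : W (⇑π ∘ f) = W f := by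
  rw [W, W]
  apply Finset.card_bij (fun g _ => ⇑π.symm ∘ g)
  · intro g hg
    simp only [Inj, Finset.mem_filter, Finset.mem_univ, true_and] at hg ⊢
    refine ⟨π.symm.injective.comp hg.1, fun i => (hg.2 i).imp fun j hj => ?_⟩
    simp only [Function.comp_apply] at hj ⊢
    rw [hj]; simp
  · intro g₁ h₁ g₂ h₂ h
    funext x
    exact π.symm.injective (congrFun h x)
  · intro g hg
    simp only [Inj, Finset.mem_filter, Finset.mem_univ, true_and] at hg
    refine ⟨⇑π ∘ g, ?_, ?_⟩
    · simp only [Inj, Finset.mem_filter, Finset.mem_univ, true_and]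
      refine ⟨π.injective.comp hg.1, fun i => (hg.2 i).imp fun j hj => ?_⟩
      simp only [Function.comp_apply] at hj ⊢
      rw [hj]
    · funext x; simp
lemma exists_perm_comp {g g' : Fin n → Fin M} (hg : Function.Injective g)
    (hg' : Function.Injective g') : ∃ π : Equiv.Perm (Fin M), ⇑π ∘ g = g' := by
  classical
  have hcard : Fintype.card ((Set.range g)ᶜ : Set (Fin M))
      = Fintype.card ((Set.range g')ᶜ : Set (Fin M)) := by
    rw [Fintype.card_compl_set, Fintype.card_compl_set,
      Set.card_range_of_injective hg, Set.card_range_of_injective hg']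
  obtain ⟨e, he⟩ := ((Equiv.Set.compl
      ((Equiv.ofInjective g hg).symm.trans (Equiv.ofInjective g' hg'))).symm
      (Fintype.equivOfCardEq hcard) : _)
  refine ⟨e, funext fun a => ?_⟩
  have := he ⟨g a, Set.mem_range_self a⟩
  simp only [Function.comp_apply]
  rw [this]
  simp




lemma sum_range_eq {g : Fin n → Fin M} (hg : Function.Injective g)
    {β : Type*} [AddCommMonoid β] (F : (Fin n → Fin M) → β) :
    ∑ f ∈ Finset.univ.filter (fun f : Fin n → Fin M => ∀ i, ∃ j, g j = f i), F f
      = ∑ c : Fin n → Fin n, F (g ∘ c) := by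
  symm
  apply Finset.sum_bij (fun (c : Fin n → Fin n) (_ : c ∈ Finset.univ) => g ∘ c)
  · intro c _
    exact Finset.mem_filter.mpr ⟨Finset.mem_univ _, fun i => ⟨c i, rfl⟩⟩
  · intro c₁ h₁ c₂ h₂ h
    funext x
    exact hg (congrFun h x)
  · intro f hf
    have hf' := (Finset.mem_filter.mp hf).2
    refine ⟨fun x => Classical.choose (hf' x), Finset.mem_univ _, ?_⟩
    funext x
    exact (Classical.choose_spec (hf' x))
  · intro c _
    rfl

lemma double_count {β : Type*} [AddCommMonoid β] (F : (Fin n → Fin M) → β) :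
    ∑ g ∈ Inj M n, ∑ f ∈ Finset.univ.filter (fun f : Fin n → Fin M => ∀ i, ∃ j, g j = f i), F f
      = ∑ f : Fin n → Fin M, W f • F f := by
  classical
  simp only [Finset.sum_filter]
  rw [Finset.sum_comm]
  refine Finset.sum_congr rfl fun f _ => ?_
  rw [W, ← Finset.sum_filter, Finset.sum_const]





noncomputable def r (g : Fin n → Fin M) : ℝ := ∑ c : Fin n → Fin n, ((W (g ∘ c) : ℝ))⁻¹

lemma r_pos (hnM : n ≤ M) (g : Fin n → Fin M) : 0 < r g := by
  haveI : Nonempty (Fin n → Fin n) := ⟨id⟩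
  apply Finset.sum_pos
  · intro c _
    exact inv_pos.mpr (by exact_mod_cast W_pos hnM (g ∘ c))
  · exact Finset.univ_nonempty

lemma W_comp_comp {g : Fin n → Fin M} (hg : Function.Injective g)
    (τ : Equiv.Perm (Fin n)) (c : Fin n → Fin n) : W (g ∘ (⇑τ ∘ c)) = W (g ∘ c) := by
  obtain ⟨π, hπ⟩ := exists_perm_comp hg (hg.comp τ.injective)
  have : g ∘ (⇑τ ∘ c) = ⇑π ∘ (g ∘ c) := by
    funext x; exact (congrFun hπ (c x)).symm
  rw [this, W_comp_perm]

lemma r_const {g g' : Fin n → Fin M} (hg : Function.Injective g)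
    (hg' : Function.Injective g') : r g = r g' := by
  obtain ⟨π, hπ⟩ := exists_perm_comp hg hg'
  rw [r, r]
  refine Finset.sum_congr rfl fun c _ => ?_
  have : g' ∘ c = ⇑π ∘ (g ∘ c) := by funext x; exact (congrFun hπ (c x)).symm
  rw [this, W_comp_perm]

lemma card_Inj_mul_r (hnM : n ≤ M) {g : Fin n → Fin M} (hg : Function.Injective g) :
    (((Inj M n).card : ℝ)) * r g = (M : ℝ) ^ n := by
  have h1 : ∑ g' ∈ Inj M n, r g' = ((Inj M n).card : ℝ) * r g := by
    have he : ∑ g' ∈ Inj M n, r g' = ∑ _g' ∈ Inj M n, r g :=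
      Finset.sum_congr rfl fun g' hg' => r_const ((Finset.mem_filter.mp hg').2) hg
    rw [he, Finset.sum_const, nsmul_eq_mul]
  have h2 : ∑ g' ∈ Inj M n, r g' = (M : ℝ) ^ n := by
    have : ∀ g' ∈ Inj M n, r g' =
        ∑ f ∈ Finset.univ.filter (fun f : Fin n → Fin M => ∀ i, ∃ j, g' j = f i),
          ((W f : ℝ))⁻¹ := by
      intro g' hg'
      rw [r, sum_range_eq (Finset.mem_filter.mp hg').2]
    rw [show (∑ g' ∈ Inj M n, r g') = _ from Finset.sum_congr rfl this,
      double_count (fun f => ((W f : ℝ))⁻¹)]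
    have : ∀ f : Fin n → Fin M, W f • ((W f : ℝ))⁻¹ = 1 := by
      intro f
      rw [nsmul_eq_mul, mul_inv_cancel₀]
      exact_mod_cast (W_pos hnM f).ne'
    rw [show (∑ f : Fin n → Fin M, W f • ((W f : ℝ))⁻¹) = ∑ _f : Fin n → Fin M, (1:ℝ) from
      Finset.sum_congr rfl (fun f _ => this f)]
    simp [Finset.card_univ]
  rw [← h1, h2]

lemma coeff_eq (hnM : n ≤ M) {g : Fin n → Fin M} (hg : Function.Injective g) (j : Fin n) :
    ∑ c : Fin n → Fin n,
      ((Finset.univ.filter (fun i => c i = j)).card : ℝ) / (W (g ∘ c) : ℝ) = r g := by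
  classical
  set φ : Fin n → ℝ := fun j => ∑ c : Fin n → Fin n,
      ((Finset.univ.filter (fun i => c i = j)).card : ℝ) / (W (g ∘ c) : ℝ) with hφ
  have hconst : ∀ j' : Fin n, φ j' = φ j := by
    intro j'
    set τ := Equiv.swap j j' with hτ
    have key := Fintype.sum_equiv (Equiv.arrowCongr (Equiv.refl (Fin n)) τ)
      (fun c : Fin n → Fin n =>
        ((Finset.univ.filter (fun i => c i = j)).card : ℝ) / (W (g ∘ c) : ℝ))
      (fun c : Fin n → Fin n =>
        ((Finset.univ.filter (fun i => c i = j')).card : ℝ) / (W (g ∘ c) : ℝ))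
      ?_
    · exact key.symm
    · intro c
      have h1 : ((Equiv.refl (Fin n)).arrowCongr τ) c = ⇑τ ∘ c := by
        funext x; simp
      rw [h1, W_comp_comp hg τ c]
      have hset : (Finset.univ.filter (fun i => (⇑τ ∘ c) i = j'))
          = Finset.univ.filter (fun i => c i = j) := by
        apply Finset.filter_congr
        intro i _
        simp only [Function.comp_apply]
        constructor
        · intro h
          apply τ.injective
          rw [h, hτ, Equiv.swap_apply_left]
        · intro h
          rw [h, hτ, Equiv.swap_apply_left]
      rw [hset]
  have hfib : ∀ c : Fin n → Fin n,
      ∑ j' : Fin n, ((Finset.univ.filter (fun i => c i = j')).card : ℝ) = (n : ℝ) := by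
    intro c
    rw [← Nat.cast_sum]
    norm_cast
    rw [← Finset.card_eq_sum_card_fiberwise (fun i (_ : i ∈ Finset.univ) => Finset.mem_univ (c i))]
    simp
  have hsum : ∑ j' : Fin n, φ j' = (n : ℝ) * r g := by
    calc ∑ j' : Fin n, φ j'
        = ∑ c : Fin n → Fin n,
            (∑ j' : Fin n, ((Finset.univ.filter (fun i => c i = j')).card : ℝ))
              / (W (g ∘ c) : ℝ) := by
          rw [hφ, Finset.sum_comm]
          exact Finset.sum_congr rfl fun c _ => (Finset.sum_div _ _ _).symm
      _ = ∑ c : Fin n → Fin n, (n : ℝ) / (W (g ∘ c) : ℝ) :=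
          Finset.sum_congr rfl fun c _ => by rw [hfib c]
      _ = (n : ℝ) * r g := by
          rw [r, Finset.mul_sum]
          exact Finset.sum_congr rfl fun c _ => div_eq_mul_inv _ _
  have hn : (n : ℝ) ≠ 0 := by
    have : 0 < n := j.pos
    exact_mod_cast this.ne'
  have hkey : (n : ℝ) * φ j = (n : ℝ) * r g := by
    have he : ∑ j' : Fin n, φ j' = ∑ _j' : Fin n, φ j :=
      Finset.sum_congr rfl fun j' _ => hconst j'
    calc (n : ℝ) * φ j = ∑ _j' : Fin n, φ j := by
          rw [Finset.sum_const]; simp [nsmul_eq_mul]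
      _ = ∑ j' : Fin n, φ j' := he.symm
      _ = (n : ℝ) * r g := hsum
  exact mul_left_cancel₀ hn hkey




lemma main_identity {d : ℕ} (hnM : n ≤ M) (v : Fin M → (Fin d → ℝ))
    {g : Fin n → Fin M} (hg : Function.Injective g) :
    r g • ∑ i, v (g i)
      = ∑ c : Fin n → Fin n, ((W (g ∘ c) : ℝ))⁻¹ • ∑ i, v (g (c i)) := by
  classical
  have inner : ∀ c : Fin n → Fin n, ∑ i, v (g (c i))
      = ∑ j : Fin n, ((Finset.univ.filter (fun i => c i = j)).card : ℝ) • v (g j) := by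
    intro c
    rw [← Finset.sum_fiberwise Finset.univ c (fun i => v (g (c i)))]
    refine Finset.sum_congr rfl fun j _ => ?_
    have : ∀ i ∈ Finset.univ.filter (fun i => c i = j), v (g (c i)) = v (g j) := by
      intro i hi
      rw [(Finset.mem_filter.mp hi).2]
    rw [Finset.sum_congr rfl this, Finset.sum_const, ← Nat.cast_smul_eq_nsmul ℝ]
  calc r g • ∑ i, v (g i)
      = ∑ j : Fin n, r g • v (g j) := Finset.smul_sum
    _ = ∑ j : Fin n, ∑ c : Fin n → Fin n,
          (((Finset.univ.filter (fun i => c i = j)).card : ℝ) / (W (g ∘ c) : ℝ)) • v (g j) := by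
        refine Finset.sum_congr rfl fun j _ => ?_
        rw [← coeff_eq hnM hg j, Finset.sum_smul]
    _ = ∑ c : Fin n → Fin n, ∑ j : Fin n,
          (((Finset.univ.filter (fun i => c i = j)).card : ℝ) / (W (g ∘ c) : ℝ)) • v (g j) :=
        Finset.sum_comm
    _ = ∑ c : Fin n → Fin n, ((W (g ∘ c) : ℝ))⁻¹ • ∑ i, v (g (c i)) := by
        refine Finset.sum_congr rfl fun c _ => ?_
        rw [inner c, Finset.smul_sum]
        refine Finset.sum_congr rfl fun j _ => ?_
        rw [smul_smul, div_eq_mul_inv, mul_comm]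

theorem final_aux (d M n : ℕ) (hnM : n ≤ M) (v : Fin M → (Fin d → ℝ)) :
    (∑ g ∈ (Finset.univ.filter (fun g : Fin n → Fin M => Function.Injective g)),
        ‖∑ i, v (g i)‖) /
      ((Finset.univ.filter (fun g : Fin n → Fin M => Function.Injective g)).card : ℝ)
    ≤ (∑ g : Fin n → Fin M, ‖∑ i, v (g i)‖) / (M : ℝ) ^ n := by
  classical
  have hg₀ : Function.Injective (fun i : Fin n => Fin.castLE hnM i) :=
    fun a b h => Fin.castLE_injective hnM h
  set g₀ : Fin n → Fin M := fun i => Fin.castLE hnM i with hg₀def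
  have hA : 0 < ((Inj M n).card : ℝ) := by
    have : (Inj M n).Nonempty :=
      ⟨g₀, Finset.mem_filter.mpr ⟨Finset.mem_univ _, hg₀⟩⟩
    exact_mod_cast Finset.card_pos.mpr this
  have hR : 0 < r g₀ := r_pos hnM g₀
  have hMA : ((Inj M n).card : ℝ) * r g₀ = (M : ℝ) ^ n := card_Inj_mul_r hnM hg₀
  have hMn : (0 : ℝ) < (M : ℝ) ^ n := hMA ▸ mul_pos hA hR
  -- per-g bound
  have hper : ∀ g ∈ Inj M n, r g₀ * ‖∑ i, v (g i)‖
      ≤ ∑ c : Fin n → Fin n, ((W (g ∘ c) : ℝ))⁻¹ * ‖∑ i, v (g (c i))‖ := by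
    intro g hgmem
    have hg : Function.Injective g := (Finset.mem_filter.mp hgmem).2
    have h1 : r g₀ * ‖∑ i, v (g i)‖ = ‖r g • ∑ i, v (g i)‖ := by
      rw [norm_smul, Real.norm_eq_abs, abs_of_pos (r_pos hnM g), r_const hg₀ hg]
    rw [h1, main_identity hnM v hg]
    refine le_trans (norm_sum_le _ _) (le_of_eq ?_)
    refine Finset.sum_congr rfl fun c _ => ?_
    rw [norm_smul, Real.norm_eq_abs, abs_of_nonneg (by positivity)]
  -- sum the bound
  have hsum : r g₀ * ∑ g ∈ Inj M n, ‖∑ i, v (g i)‖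
      ≤ ∑ f : Fin n → Fin M, ‖∑ i, v (f i)‖ := by
    rw [Finset.mul_sum]
    refine le_trans (Finset.sum_le_sum hper) (le_of_eq ?_)
    have step : ∀ g ∈ Inj M n,
        (∑ c : Fin n → Fin n, ((W (g ∘ c) : ℝ))⁻¹ * ‖∑ i, v (g (c i))‖)
        = ∑ f ∈ Finset.univ.filter (fun f : Fin n → Fin M => ∀ i, ∃ j, g j = f i),
            ((W f : ℝ))⁻¹ * ‖∑ i, v (f i)‖ := by
      intro g hgmem
      exact (sum_range_eq (Finset.mem_filter.mp hgmem).2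
        (fun f => ((W f : ℝ))⁻¹ * ‖∑ i, v (f i)‖)).symm
    rw [Finset.sum_congr rfl step,
      double_count (fun f => ((W f : ℝ))⁻¹ * ‖∑ i, v (f i)‖)]
    refine Finset.sum_congr rfl fun f _ => ?_
    rw [nsmul_eq_mul, ← mul_assoc, mul_inv_cancel₀, one_mul]
    exact_mod_cast (W_pos hnM f).ne'
  -- conclude
  have hInj : (Finset.univ.filter (fun g : Fin n → Fin M => Function.Injective g)) = Inj M n :=
    rfl
  rw [hInj, div_le_div_iff₀ hA hMn]
  calc (∑ g ∈ Inj M n, ‖∑ i, v (g i)‖) * (M : ℝ) ^ n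
      = ((Inj M n).card : ℝ) * (r g₀ * ∑ g ∈ Inj M n, ‖∑ i, v (g i)‖) := by
        rw [← hMA]; ring
    _ ≤ ((Inj M n).card : ℝ) * ∑ f : Fin n → Fin M, ‖∑ i, v (f i)‖ :=
        mul_le_mul_of_nonneg_left hsum hA.le
    _ = (∑ g : Fin n → Fin M, ‖∑ i, v (g i)‖) * ((Inj M n).card : ℝ) := mul_comm _ _

end WRDom

/-- Without-replacement sampling is dominated by with-replacement sampling
for the expected sup-norm of the sum. -/
theorem without_replacement_dominated_by_with_replacement
    (d M n : ℕ) (hnM : n ≤ M) (v : Fin M → (Fin d → ℝ)) :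
    (∑ g ∈ (Finset.univ.filter (fun g : Fin n → Fin M => Function.Injective g)),
        ‖∑ i, v (g i)‖) /
      ((Finset.univ.filter (fun g : Fin n → Fin M => Function.Injective g)).card : ℝ)
    ≤ (∑ g : Fin n → Fin M, ‖∑ i, v (g i)‖) / (M : ℝ) ^ n :=
  WRDom.final_aux d M n hnM v
end

section
/- Conditional probability of including a fixed small set, with replacement: Let a code C be formed by M independent uniform draws from a ground set of size N₀', and let Λ be a fixed set of D' distinct elements of the ground set, with N₀' ≥ 4D', M ≥ D', and draw probability parameter p := M/N₀' ≤ 1/4. Then the probability that every element of Λ is drawn exactly once is at least C(M, D')·(1 − D'/N₀')^{M−D'}·(D')!/(N₀')^{D'} ≥ (p/(2e))^{D'}. -/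
open Finset

lemma count_lb (N₀' M D' : ℕ) (Λ : Finset (Fin N₀')) (hΛ : Λ.card = D') :
    M.descFactorial D' * (N₀' - D') ^ (M - D') ≤
      (Finset.univ.filter (fun f : Fin M → Fin N₀' =>
        ∀ a ∈ Λ, (Finset.univ.filter (fun i => f i = a)).card = 1)).card := by
  classical
  set P : (Fin M → Fin N₀') → Prop := fun f =>
    ∀ a ∈ Λ, (univ.filter (fun i => f i = a)).card = 1 with hP
  let T := Σ g : (↥Λ ↪ Fin M), ({ i : Fin M // ¬ ∃ a, g a = i } → ↥(Λᶜ))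
  -- the injection
  let Φ : T → (Fin M → Fin N₀') := fun x i =>
    if hi : ∃ a, x.1 a = i then ↑hi.choose else ↑(x.2 ⟨i, hi⟩)
  have hΦmem : ∀ x : T, P (Φ x) := by
    intro ⟨g, h⟩ a ha
    rw [Finset.card_eq_one]
    refine ⟨g ⟨a, ha⟩, ?_⟩
    ext i
    simp only [mem_filter, mem_univ, true_and, mem_singleton]
    constructor
    · intro hfi
      by_cases hi : ∃ b, g b = i
      · have : Φ ⟨g, h⟩ i = ↑hi.choose := dif_pos hi
        rw [this] at hfi
        have : hi.choose = ⟨a, ha⟩ := Subtype.ext hfi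
        rw [← hi.choose_spec, this]
      · have : Φ ⟨g, h⟩ i = ↑(h ⟨i, hi⟩) := dif_neg hi
        rw [this] at hfi
        exfalso
        have := (h ⟨i, hi⟩).2
        rw [Finset.mem_compl] at this
        exact this (hfi ▸ ha)
    · rintro rfl
      have hi : ∃ b, g b = g ⟨a, ha⟩ := ⟨⟨a, ha⟩, rfl⟩
      have h1 : Φ ⟨g, h⟩ (g ⟨a, ha⟩) = ↑hi.choose := dif_pos hi
      have h2 : hi.choose = ⟨a, ha⟩ := g.injective hi.choose_spec
      rw [h1, h2]
  have hΦval : ∀ (x : T) (a : ↥Λ), Φ x (x.1 a) = ↑a := by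
    intro ⟨g, h⟩ a
    have hi : ∃ b, g b = g a := ⟨a, rfl⟩
    have h1 : Φ ⟨g, h⟩ (g a) = ↑hi.choose := dif_pos hi
    rw [h1, g.injective hi.choose_spec]
  have hΦinj : Function.Injective Φ := by
    intro ⟨g, h⟩ ⟨g', h'⟩ heq
    have hg : g = g' := by
      ext a
      have h1 : Φ ⟨g, h⟩ (g a) = ↑a := hΦval ⟨g, h⟩ a
      have h2 : Φ ⟨g', h'⟩ (g a) = ↑a := heq ▸ h1
      by_cases hi : ∃ b, g' b = g a
      · have : Φ ⟨g', h'⟩ (g a) = ↑hi.choose := dif_pos hi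
        rw [this] at h2
        have : hi.choose = a := Subtype.ext h2
        rw [← hi.choose_spec, this]
      · exfalso
        have : Φ ⟨g', h'⟩ (g a) = ↑(h' ⟨g a, hi⟩) := dif_neg hi
        rw [this] at h2
        have hc := (h' ⟨g a, hi⟩).2
        rw [Finset.mem_compl] at hc
        exact hc (h2 ▸ a.2)
    subst hg
    have hh : h = h' := by
      funext i
      obtain ⟨i, hi⟩ := i
      have h1 : Φ ⟨g, h⟩ i = ↑(h ⟨i, hi⟩) := dif_neg hi
      have h2 : Φ ⟨g, h'⟩ i = ↑(h' ⟨i, hi⟩) := dif_neg hi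
      exact Subtype.ext (by rw [← h1, ← h2, heq])
    rw [hh]
  -- cardinalities
  have hcard1 : (univ.filter P).card = Fintype.card {f : Fin M → Fin N₀' // P f} :=
    (Fintype.card_subtype P).symm
  have hinj2 : Function.Injective (fun x : T => (⟨Φ x, hΦmem x⟩ : {f // P f})) := by
    intro x y hxy
    exact hΦinj (congrArg Subtype.val hxy)
  have hle : Fintype.card T ≤ Fintype.card {f : Fin M → Fin N₀' // P f} :=
    Fintype.card_le_of_injective _ hinj2
  have hT : Fintype.card T = M.descFactorial D' * (N₀' - D') ^ (M - D') := by
    rw [Fintype.card_sigma]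
    have hfib : ∀ g : ↥Λ ↪ Fin M,
        Fintype.card ({ i : Fin M // ¬ ∃ a, g a = i } → ↥(Λᶜ)) =
          (N₀' - D') ^ (M - D') := by
      intro g
      rw [Fintype.card_fun]
      congr 1
      · rw [Fintype.card_coe, Finset.card_compl, hΛ, Fintype.card_fin]
      · rw [Fintype.card_subtype_compl]
        congr 1
        · exact Fintype.card_fin M
        · have : Fintype.card {i : Fin M // ∃ a, g a = i} = Fintype.card ↥Λ :=
            Fintype.card_congr (Equiv.ofInjective g g.injective).symm
          rw [this, Fintype.card_coe, hΛ]
    rw [Finset.sum_congr rfl (fun g _ => hfib g), Finset.sum_const, Finset.card_univ,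
      Fintype.card_embedding_eq, Fintype.card_coe, hΛ, Fintype.card_fin, smul_eq_mul]
  rw [← hT]
  rw [hcard1]
  exact hle

open Finset

lemma choose_lb (M D' : ℕ) (hMD : D' ≤ M) :
    ((M : ℝ) / D') ^ D' ≤ (M.choose D' : ℝ) := by
  rcases Nat.eq_zero_or_pos D' with h0 | hD
  · simp [h0]
  have hDpos : (0 : ℝ) < D' := by exact_mod_cast hD
  have hdesc : ((M.descFactorial D' : ℕ) : ℝ) = ∏ i ∈ range D', ((M : ℝ) - i) := by
    rw [Nat.descFactorial_eq_prod_range, Nat.cast_prod]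
    refine Finset.prod_congr rfl fun i hi => ?_
    rw [Nat.cast_sub (le_trans (Nat.le_of_lt (mem_range.1 hi)) hMD)]
  have hfact : ((D'.factorial : ℕ) : ℝ) = ∏ i ∈ range D', ((D' : ℝ) - i) := by
    rw [← Nat.descFactorial_self, Nat.descFactorial_eq_prod_range, Nat.cast_prod]
    refine Finset.prod_congr rfl fun i hi => ?_
    rw [Nat.cast_sub (Nat.le_of_lt (mem_range.1 hi))]
  have key : ((M : ℝ) / D') ^ D' * (D'.factorial : ℝ) ≤ (M.descFactorial D' : ℝ) := by
    rw [hdesc, hfact]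
    have : ((M : ℝ) / D') ^ D' * ∏ i ∈ range D', ((D' : ℝ) - i)
        = ∏ i ∈ range D', ((M : ℝ) / D' * ((D' : ℝ) - i)) := by
      rw [Finset.prod_mul_distrib, Finset.prod_const, Finset.card_range]
    rw [this]
    refine Finset.prod_le_prod (fun i hi => ?_) (fun i hi => ?_)
    · have hi' : (i : ℝ) < D' := by exact_mod_cast mem_range.1 hi
      have h1 : (0:ℝ) ≤ (M : ℝ) / D' := by positivity
      exact mul_nonneg h1 (by linarith)
    · have hi' : (i : ℝ) < D' := by exact_mod_cast mem_range.1 hi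
      have hM : (D' : ℝ) ≤ M := by exact_mod_cast hMD
      rw [div_mul_eq_mul_div, div_le_iff₀ hDpos]
      nlinarith [mul_le_mul_of_nonneg_left hM (Nat.cast_nonneg i : (0:ℝ) ≤ i)]
  have hfc : (M.descFactorial D' : ℝ) = (D'.factorial : ℝ) * (M.choose D' : ℝ) := by
    exact_mod_cast congrArg (Nat.cast : ℕ → ℝ) (Nat.descFactorial_eq_factorial_mul_choose M D')
  rw [hfc] at key
  have hfpos : (0 : ℝ) < (D'.factorial : ℝ) := by exact_mod_cast D'.factorial_pos
  rw [mul_comm ((D'.factorial : ℝ))] at key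
  exact le_of_mul_le_mul_right key hfpos

lemma fact_lb (D' : ℕ) : ((D' : ℝ) / Real.exp 1) ^ D' ≤ (D'.factorial : ℝ) := by
  have h := Real.pow_div_factorial_le_exp (x := (D' : ℝ)) (Nat.cast_nonneg D') D'
  have he : (0 : ℝ) < Real.exp 1 := Real.exp_pos 1
  have hfpos : (0 : ℝ) < (D'.factorial : ℝ) := by exact_mod_cast D'.factorial_pos
  rw [div_le_iff₀ hfpos] at h
  have hexp : Real.exp (D' : ℝ) = Real.exp 1 ^ D' := by
    rw [← Real.exp_nat_mul, mul_one]
  rw [div_pow, div_le_iff₀ (by positivity)]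
  rw [hexp] at h
  linarith [h]

lemma exp_neg_two_le (t : ℝ) (h0 : 0 ≤ t) (h2 : t ≤ 1/2) :
    Real.exp (-(2*t)) ≤ 1 - t := by
  have h := Real.add_one_le_exp (2*t)
  have hmul : Real.exp (-(2*t)) * Real.exp (2*t) = 1 := by
    rw [← Real.exp_add]; simp
  have hpos : (0:ℝ) < Real.exp (2*t) := Real.exp_pos _
  nlinarith [mul_nonneg h0 (sub_nonneg.2 h2), Real.exp_pos (-(2*t))]

lemma exp_half_lt_two : Real.exp (1/2) < 2 := by
  have h1 : Real.exp (1/2) ^ (2:ℕ) = Real.exp 1 := by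
    rw [← Real.exp_nat_mul]; norm_num
  have h2 : Real.exp 1 < 2.7182818286 := Real.exp_one_lt_d9
  nlinarith [Real.exp_pos (1/2 : ℝ)]

/-- Conditional probability of including a fixed small set, with replacement. -/
theorem include_fixed_set_with_replacement
    (N₀' M D' : ℕ) (Λ : Finset (Fin N₀')) (hΛ : Λ.card = D')
    (hN₀' : 4 * D' ≤ N₀') (hMD : D' ≤ M) (hN₀'pos : 0 < N₀')
    (p : ℝ) (hp : p = (M : ℝ) / N₀') (hp4 : p ≤ 1 / 4) :
    (((Finset.univ.filter (fun f : Fin M → Fin N₀' =>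
          ∀ a ∈ Λ, (Finset.univ.filter (fun i => f i = a)).card = 1)).card : ℝ)
        / (N₀' : ℝ) ^ M
      ≥ (M.choose D' : ℝ) * (1 - (D' : ℝ) / N₀') ^ (M - D') *
          (Nat.factorial D' : ℝ) / (N₀' : ℝ) ^ D')
    ∧ (M.choose D' : ℝ) * (1 - (D' : ℝ) / N₀') ^ (M - D') *
          (Nat.factorial D' : ℝ) / (N₀' : ℝ) ^ D'
        ≥ (p / (2 * Real.exp 1)) ^ D' := by
  have hDN : D' ≤ N₀' := le_trans (by omega) hN₀'
  have hN : (0:ℝ) < N₀' := by exact_mod_cast hN₀'pos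
  have h1 : (1 - (D':ℝ)/N₀') = ((N₀' - D' : ℕ):ℝ)/(N₀':ℝ) := by
    rw [Nat.cast_sub hDN]
    field_simp
  constructor
  · -- part 1
    have hR : (M.choose D' : ℝ) * (1 - (D' : ℝ) / N₀') ^ (M - D') *
          (Nat.factorial D' : ℝ) / (N₀' : ℝ) ^ D'
        = ((M.descFactorial D' * (N₀' - D') ^ (M - D') : ℕ) : ℝ) / (N₀' : ℝ) ^ M := by
      rw [h1, div_pow]
      rw [show ((N₀':ℝ))^M = ((N₀':ℝ))^D' * ((N₀':ℝ))^(M-D') by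
        rw [← pow_add, Nat.add_sub_cancel' hMD]]
      push_cast [Nat.descFactorial_eq_factorial_mul_choose]
      field_simp
    rw [ge_iff_le, hR]
    apply div_le_div_of_nonneg_right ?_ (by positivity)
    exact_mod_cast count_lb N₀' M D' Λ hΛ
  · -- part 2
    rcases Nat.eq_zero_or_pos D' with h0 | hD
    · subst h0
      simp
    have hDR : (0:ℝ) < D' := by exact_mod_cast hD
    have hM4 : (M:ℝ) ≤ (N₀':ℝ)/4 := by
      rw [hp, div_le_div_iff₀ hN (by norm_num)] at hp4
      linarith
    have hts : (D':ℝ)/N₀' ≤ 1/2 := by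
      rw [div_le_div_iff₀ hN (by norm_num)]
      have : (4:ℝ) * D' ≤ N₀' := by exact_mod_cast hN₀'
      linarith
    have ht0 : (0:ℝ) ≤ (D':ℝ)/N₀' := by positivity
    -- bound on (1-t)^(M-D')
    have hB : ((1:ℝ)/2) ^ D' ≤ (1 - (D':ℝ)/N₀') ^ (M - D') := by
      have hexp : Real.exp (-(2*((D':ℝ)/N₀'))) ≤ 1 - (D':ℝ)/N₀' :=
        exp_neg_two_le _ ht0 hts
      have step1 : Real.exp (-(2*((D':ℝ)/N₀'))) ^ (M - D') ≤ (1 - (D':ℝ)/N₀') ^ (M - D') :=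
        pow_le_pow_left₀ (Real.exp_nonneg _) hexp _
      refine le_trans ?_ step1
      rw [← Real.exp_nat_mul]
      have hhalf : (1:ℝ)/2 ≤ Real.exp (-(1/2)) := by
        rw [Real.exp_neg]
        rw [div_le_iff₀ (by norm_num : (0:ℝ) < 2)]
        have := exp_half_lt_two
        have hep := Real.exp_pos (1/2 : ℝ)
        rw [inv_mul_eq_div, le_div_iff₀ hep]
        linarith
      calc ((1:ℝ)/2) ^ D' ≤ Real.exp (-(1/2)) ^ D' :=
            pow_le_pow_left₀ (by norm_num) hhalf _
        _ = Real.exp (-((D':ℝ)/2)) := by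
            rw [← Real.exp_nat_mul]; ring_nf
        _ ≤ Real.exp (((M - D' : ℕ) : ℝ) * -(2*((D':ℝ)/N₀'))) := by
            apply Real.exp_le_exp.2
            have hMD' : ((M - D' : ℕ) : ℝ) ≤ (M:ℝ) := by
              exact_mod_cast Nat.sub_le M D'
            have hMnn : (0:ℝ) ≤ ((M - D' : ℕ) : ℝ) := Nat.cast_nonneg _
            have key : ((M - D' : ℕ) : ℝ) * (2*((D':ℝ)/N₀')) ≤ (D':ℝ)/2 := by
              have h2t : (0:ℝ) ≤ 2*((D':ℝ)/N₀') := by positivity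
              calc ((M - D' : ℕ) : ℝ) * (2*((D':ℝ)/N₀'))
                  ≤ (M:ℝ) * (2*((D':ℝ)/N₀')) := by
                    exact mul_le_mul_of_nonneg_right hMD' h2t
                _ ≤ ((N₀':ℝ)/4) * (2*((D':ℝ)/N₀')) := by
                    exact mul_le_mul_of_nonneg_right hM4 h2t
                _ = (D':ℝ)/2 := by field_simp; ring
            linarith
    have hA := choose_lb M D' hMD
    have hC := fact_lb D'
    have hbase : p / (2 * Real.exp 1)
        = ((M:ℝ)/D') * (1/2) * ((D':ℝ)/Real.exp 1) / N₀' := by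
      rw [hp]
      have he := Real.exp_pos 1
      field_simp
    rw [ge_iff_le, hbase]
    calc (((M:ℝ)/D') * (1/2) * ((D':ℝ)/Real.exp 1) / (N₀':ℝ)) ^ D'
        = ((M:ℝ)/D') ^ D' * ((1:ℝ)/2) ^ D' * ((D':ℝ)/Real.exp 1) ^ D' / (N₀':ℝ) ^ D' := by
          rw [div_pow, mul_pow, mul_pow]
      _ ≤ (M.choose D' : ℝ) * (1 - (D' : ℝ) / N₀') ^ (M - D') *
          (Nat.factorial D' : ℝ) / (N₀' : ℝ) ^ D' := by
          have h1t' : (0:ℝ) ≤ 1 - (D':ℝ)/N₀' := by linarith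
          gcongr ?_ * ?_ * ?_ / _
end
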